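/- arXiv:2011.10746 — 2 statements merged into one kernel-verified Lean document; each statement's English description precedes it below -/
import Mathlib

section
/- Let g ∈ C²([a,b]) with m = min g'' and M = max g'' on [a,b]. For x_i ∈ [a,b] and positive weights p_i with ∑p_i = 1, set x̄ = ∑ p_i x_i and J = ∑ p_i x_i² − x̄². Then (m/2)[2(x̄ − a)(b − x̄) − J] ≤ g(a) + g(b) − ∑ p_i g(x_i) − g(a + b − x̄) ≤ (M/2)[2(x̄ − a)(b − x̄) − J]. -/
/-!
Write `Δ(f) = f a + f b - ∑ pᵢ f(xᵢ) - f(a + b - x̄)` for the Jensen–Mercer gap, which is linear in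
`f` and nonnegative for `f` convex on `[a, b]`. If `m ≤ g''` then `g - (m/2) t²` is convex, so
`(m/2) Δ(t²) ≤ Δ(g)`; applied to `-g` and `-M` this gives the upper bound. Finally `Δ(t²)` is
exactly `2 (x̄ - a)(b - x̄) - J`.
-/

open Set Finset

section MercerGap

variable {ι : Type*} (s : Finset ι) (p x : ι → ℝ) (a b : ℝ)

noncomputable def mercerGap (f : ℝ → ℝ) : ℝ :=
  f a + f b - ∑ i ∈ s, p i * f (x i) - f (a + b - ∑ i ∈ s, p i * x i)

theorem mercerGap_sub (f g : ℝ → ℝ) :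
    mercerGap s p x a b (fun t => f t - g t) = mercerGap s p x a b f - mercerGap s p x a b g := by
  simp only [mercerGap, mul_sub, sum_sub_distrib]
  ring

theorem mercerGap_const_mul (c : ℝ) (f : ℝ → ℝ) :
    mercerGap s p x a b (fun t => c * f t) = c * mercerGap s p x a b f := by
  simp only [mercerGap, mul_left_comm (p _) c, ← mul_sum]
  ring

theorem mercerGap_neg (f : ℝ → ℝ) :
    mercerGap s p x a b (fun t => -f t) = -mercerGap s p x a b f := by
  simpa using mercerGap_const_mul s p x a b (-1) f

theorem mercerGap_sq :
    mercerGap s p x a b (fun t => t ^ 2) =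
      2 * ((∑ i ∈ s, p i * x i) - a) * (b - ∑ i ∈ s, p i * x i) -
        (∑ i ∈ s, p i * (x i) ^ 2 - (∑ i ∈ s, p i * x i) ^ 2) := by
  simp only [mercerGap]
  ring

end MercerGap

theorem ConvexOn.map_add_sub_le {f : ℝ → ℝ} {a b x : ℝ} (hf : ConvexOn ℝ (Icc a b) f)
    (hx : x ∈ Icc a b) : f (a + b - x) ≤ f a + f b - f x := by
  obtain ⟨hax, hxb⟩ := hx
  rcases (hax.trans hxb).eq_or_lt with rfl | hab
  · obtain rfl := le_antisymm hxb hax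
    simp
  -- `x` and `a + b - x` are the convex combinations of `a, b` with swapped weights `t, 1 - t`.
  set t := (b - x) / (b - a)
  have hba : 0 < b - a := sub_pos.2 hab
  have ht0 : 0 ≤ t := div_nonneg (sub_nonneg.2 hxb) hba.le
  have ht1 : 0 ≤ 1 - t := by
    rw [sub_nonneg, div_le_one hba]
    linarith
  have hx_eq : t • a + (1 - t) • b = x := by
    simp only [t, smul_eq_mul]
    field_simp
    ring
  have hy_eq : (1 - t) • a + t • b = a + b - x := by
    simp only [t, smul_eq_mul]
    field_simp
    ring
  have hfx := hf.2 (left_mem_Icc.2 hab.le) (right_mem_Icc.2 hab.le) ht0 ht1 (add_sub_cancel t 1)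
  have hfy := hf.2 (left_mem_Icc.2 hab.le) (right_mem_Icc.2 hab.le) ht1 ht0 (sub_add_cancel 1 t)
  rw [hx_eq] at hfx
  rw [hy_eq] at hfy
  simp only [smul_eq_mul] at hfx hfy
  linarith

theorem ConvexOn.mercerGap_nonneg {ι : Type*} {s : Finset ι} {p x : ι → ℝ} {a b : ℝ}
    {f : ℝ → ℝ} (hf : ConvexOn ℝ (Icc a b) f) (hp₀ : ∀ i ∈ s, 0 ≤ p i)
    (hp₁ : ∑ i ∈ s, p i = 1) (hx : ∀ i ∈ s, x i ∈ Icc a b) :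
    0 ≤ mercerGap s p x a b f := by
  have hmem : ∀ i ∈ s, a + b - x i ∈ Icc a b := fun i hi =>
    ⟨by linarith [(hx i hi).2], by linarith [(hx i hi).1]⟩
  have hreflect : a + b - ∑ i ∈ s, p i * x i = ∑ i ∈ s, p i • (a + b - x i) := by
    simp only [smul_eq_mul, mul_sub, sum_sub_distrib, ← sum_mul, hp₁, one_mul]
  have hjensen := hf.map_sum_le hp₀ hp₁ hmem
  have hpointwise : ∑ i ∈ s, p i • f (a + b - x i) ≤ ∑ i ∈ s, p i * (f a + f b - f (x i)) :=
    sum_le_sum fun i hi => mul_le_mul_of_nonneg_left (hf.map_add_sub_le (hx i hi)) (hp₀ i hi)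
  have hexpand : ∑ i ∈ s, p i * (f a + f b - f (x i)) = f a + f b - ∑ i ∈ s, p i * f (x i) := by
    simp only [mul_sub, mul_add, sum_sub_distrib, sum_add_distrib, ← sum_mul, hp₁, one_mul]
  rw [mercerGap, hreflect]
  linarith

theorem convexOn_sub_half_mul_sq {D : Set ℝ} (hD : Convex ℝ D) {f f' f'' : ℝ → ℝ} {m : ℝ}
    (hf' : ∀ t ∈ D, HasDerivAt f (f' t) t) (hf'' : ∀ t ∈ D, HasDerivAt f' (f'' t) t)
    (hm : ∀ t ∈ D, m ≤ f'' t) : ConvexOn ℝ D (fun t => f t - m / 2 * t ^ 2) := by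
  have hd₁ : ∀ t ∈ D, HasDerivAt (fun t => f t - m / 2 * t ^ 2) (f' t - m * t) t :=
    fun t ht => ((hf' t ht).sub ((hasDerivAt_pow 2 t).const_mul (m / 2))).congr_deriv (by ring)
  have hd₂ : ∀ t ∈ D, HasDerivAt (fun t => f' t - m * t) (f'' t - m) t :=
    fun t ht => ((hf'' t ht).sub ((hasDerivAt_id t).const_mul m)).congr_deriv (by ring)
  exact convexOn_of_hasDerivWithinAt2_nonneg hD
    (fun t ht => (hd₁ t ht).continuousAt.continuousWithinAt)
    (fun t ht => (hd₁ t (interior_subset ht)).hasDerivWithinAt)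
    (fun t ht => (hd₂ t (interior_subset ht)).hasDerivWithinAt)
    (fun t ht => sub_nonneg.2 (hm t (interior_subset ht)))

theorem half_mul_mercerGap_sq_le {ι : Type*} {s : Finset ι} {p x : ι → ℝ} {a b m : ℝ}
    {f f' f'' : ℝ → ℝ} (hf' : ∀ t ∈ Icc a b, HasDerivAt f (f' t) t)
    (hf'' : ∀ t ∈ Icc a b, HasDerivAt f' (f'' t) t) (hm : ∀ t ∈ Icc a b, m ≤ f'' t)
    (hp₀ : ∀ i ∈ s, 0 ≤ p i) (hp₁ : ∑ i ∈ s, p i = 1) (hx : ∀ i ∈ s, x i ∈ Icc a b) :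
    m / 2 * mercerGap s p x a b (fun t => t ^ 2) ≤ mercerGap s p x a b f := by
  have hgap := (convexOn_sub_half_mul_sq (convex_Icc a b) hf' hf'' hm).mercerGap_nonneg hp₀ hp₁ hx
  rwa [mercerGap_sub, mercerGap_const_mul, sub_nonneg] at hgap

theorem jensen_mercer_nonconvex_general
    (n : ℕ) (a b m M : ℝ)
    (g g' g'' : ℝ → ℝ)
    (hg' : ∀ t ∈ Set.Icc a b, HasDerivAt g (g' t) t)
    (hg'' : ∀ t ∈ Set.Icc a b, HasDerivAt g' (g'' t) t)
    (hm : ∀ t ∈ Set.Icc a b, m ≤ g'' t)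
    (hM : ∀ t ∈ Set.Icc a b, g'' t ≤ M)
    (p x : Fin n → ℝ)
    (hp : ∀ i, 0 < p i) (hps : ∑ i, p i = 1)
    (hx : ∀ i, x i ∈ Set.Icc a b) :
    (m / 2) * (2 * ((∑ i, p i * x i) - a) * (b - ∑ i, p i * x i) -
        (∑ i, p i * (x i) ^ 2 - (∑ i, p i * x i) ^ 2)) ≤
      g a + g b - ∑ i, p i * g (x i) - g (a + b - ∑ i, p i * x i) ∧
    g a + g b - ∑ i, p i * g (x i) - g (a + b - ∑ i, p i * x i) ≤
      (M / 2) * (2 * ((∑ i, p i * x i) - a) * (b - ∑ i, p i * x i) -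
        (∑ i, p i * (x i) ^ 2 - (∑ i, p i * x i) ^ 2)) := by
  have hp₀ : ∀ i ∈ Finset.univ, 0 ≤ p i := fun i _ => (hp i).le
  have hx' : ∀ i ∈ Finset.univ, x i ∈ Icc a b := fun i _ => hx i
  have lower := half_mul_mercerGap_sq_le hg' hg'' hm hp₀ hps hx'
  have upper := half_mul_mercerGap_sq_le (m := -M) (f := fun t => -g t)
    (fun t ht => (hg' t ht).neg) (fun t ht => (hg'' t ht).neg)
    (fun t ht => neg_le_neg (hM t ht)) hp₀ hps hx'
  rw [mercerGap_neg, neg_div, neg_mul, neg_le_neg_iff] at upper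
  rw [mercerGap_sq] at lower upper
  exact ⟨lower, upper⟩

theorem jensen_mercer_nonconvex
    (n : ℕ) (a b m M : ℝ) (hab : a ≤ b)
    (g g' g'' : ℝ → ℝ)
    (hg' : ∀ t ∈ Set.Icc a b, HasDerivAt g (g' t) t)
    (hg'' : ∀ t ∈ Set.Icc a b, HasDerivAt g' (g'' t) t)
    (hgc : ContinuousOn g'' (Set.Icc a b))
    (hm : ∀ t ∈ Set.Icc a b, m ≤ g'' t) (hm' : ∃ t ∈ Set.Icc a b, g'' t = m)
    (hM : ∀ t ∈ Set.Icc a b, g'' t ≤ M) (hM' : ∃ t ∈ Set.Icc a b, g'' t = M)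
    (p x : Fin n → ℝ)
    (hp : ∀ i, 0 < p i) (hps : ∑ i, p i = 1)
    (hx : ∀ i, x i ∈ Set.Icc a b) :
    (m / 2) * (2 * ((∑ i, p i * x i) - a) * (b - ∑ i, p i * x i) -
        (∑ i, p i * (x i) ^ 2 - (∑ i, p i * x i) ^ 2)) ≤
      g a + g b - ∑ i, p i * g (x i) - g (a + b - ∑ i, p i * x i) ∧
    g a + g b - ∑ i, p i * g (x i) - g (a + b - ∑ i, p i * x i) ≤
      (M / 2) * (2 * ((∑ i, p i * x i) - a) * (b - ∑ i, p i * x i) -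
        (∑ i, p i * (x i) ^ 2 - (∑ i, p i * x i) ^ 2)) :=
  jensen_mercer_nonconvex_general n a b m M g g' g'' hg' hg'' hm hM p x hp hps hx
end

section
/- Let 0 < a < 1/2 and a ≤ x_i ≤ 1−a, with w_i > 0, ∑ w_i = 1. Set T = exp( (1−2a)/(2(a(1−a))²) · [∑ w_i x_i² − (∑ w_i x_i)²] ). Then (1/T) · ∏ (x_i/(1−x_i))^{w_i} ≤ (∑ w_i x_i)/(∑ w_i(1−x_i)) ≤ T · ∏ (x_i/(1−x_i))^{w_i}. -/
/-!
Both bounds are a Jensen gap estimate for `logit y = log (y / (1 - y))`. If `|f''| ≤ M` on an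
interval, then `M / 2 * y ^ 2 + f y` and `M / 2 * y ^ 2 - f y` are convex there, so Jensen's
inequality for these two functions shows that `∑ wᵢ f xᵢ` and `f (∑ wᵢ xᵢ)` differ by at most
`M / 2` times the variance `∑ wᵢ xᵢ² - (∑ wᵢ xᵢ)²`. On `[a, 1 - a]` one has
`|logit''| ≤ (1 - 2a) / (a (1 - a))²`; exponentiating the estimate for `logit` gives the theorem.
-/

open Real Set Finset

section JensenGap

variable {D : Set ℝ} {f f' f'' : ℝ → ℝ} {M : ℝ}

theorem convexOn_mul_sq_add_of_abs_deriv2_le (hD : Convex ℝ D) (hf : ContinuousOn f D)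
    (hf' : ∀ x ∈ interior D, HasDerivWithinAt f (f' x) (interior D) x)
    (hf'' : ∀ x ∈ interior D, HasDerivWithinAt f' (f'' x) (interior D) x)
    (hM : ∀ x ∈ interior D, |f'' x| ≤ M) {c : ℝ} (hc : |c| ≤ 1) :
    ConvexOn ℝ D (fun x => M / 2 * x ^ 2 + c * f x) := by
  refine convexOn_of_hasDerivWithinAt2_nonneg (f' := fun x => M * x + c * f' x)
    (f'' := fun x => M + c * f'' x) hD (by fun_prop) (fun x hx => ?_) (fun x hx => ?_)
    (fun x hx => ?_)
  · have hsq := ((hasDerivAt_pow 2 x).const_mul (M / 2)).hasDerivWithinAt (s := interior D)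
    exact (hsq.add ((hf' x hx).const_mul c)).congr_deriv (by ring)
  · have hlin := ((hasDerivAt_id' x).const_mul M).hasDerivWithinAt (s := interior D)
    exact (hlin.add ((hf'' x hx).const_mul c)).congr_deriv (by ring)
  · have hcf : |c * f'' x| ≤ M := by
      rw [abs_mul]
      nlinarith [abs_nonneg c, abs_nonneg (f'' x), hM x hx]
    linarith [neg_abs_le (c * f'' x)]

theorem abs_sum_mul_sub_map_sum_le_of_abs_deriv2_le (hD : Convex ℝ D) (hf : ContinuousOn f D)
    (hf' : ∀ x ∈ interior D, HasDerivWithinAt f (f' x) (interior D) x)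
    (hf'' : ∀ x ∈ interior D, HasDerivWithinAt f' (f'' x) (interior D) x)
    (hM : ∀ x ∈ interior D, |f'' x| ≤ M) {ι : Type*} {t : Finset ι} {w p : ι → ℝ}
    (hw : ∀ i ∈ t, 0 ≤ w i) (hw₁ : ∑ i ∈ t, w i = 1) (hp : ∀ i ∈ t, p i ∈ D) :
    |∑ i ∈ t, w i * f (p i) - f (∑ i ∈ t, w i * p i)| ≤
      M / 2 * (∑ i ∈ t, w i * p i ^ 2 - (∑ i ∈ t, w i * p i) ^ 2) := by
  have jensen : ∀ c : ℝ, |c| ≤ 1 →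
      c * (f (∑ i ∈ t, w i * p i) - ∑ i ∈ t, w i * f (p i)) ≤
        M / 2 * (∑ i ∈ t, w i * p i ^ 2 - (∑ i ∈ t, w i * p i) ^ 2) := by
    intro c hc
    have h := (convexOn_mul_sq_add_of_abs_deriv2_le hD hf hf' hf'' hM hc).map_sum_le hw hw₁ hp
    have hsum : ∑ i ∈ t, w i • (M / 2 * p i ^ 2 + c * f (p i)) =
        M / 2 * ∑ i ∈ t, w i * p i ^ 2 + c * ∑ i ∈ t, w i * f (p i) := by
      simp only [smul_eq_mul, Finset.mul_sum, ← sum_add_distrib]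
      exact sum_congr rfl fun i _ => by ring
    simp only [smul_eq_mul] at h hsum
    linarith
  rw [abs_le]
  constructor <;> linarith [jensen 1 (by simp), jensen (-1) (by simp)]

end JensenGap

noncomputable def logit (y : ℝ) : ℝ := log (y / (1 - y))

lemma hasDerivAt_logit {y : ℝ} (h₀ : 0 < y) (h₁ : y < 1) :
    HasDerivAt logit (y * (1 - y))⁻¹ y := by
  have h₁' : 0 < 1 - y := by linarith
  have hdiv := (hasDerivAt_id' y).div ((hasDerivAt_id' y).const_sub 1) h₁'.ne'
  refine (hdiv.log (div_pos h₀ h₁').ne').congr_deriv ?_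
  simp only [Pi.div_apply]
  field_simp
  ring

lemma hasDerivAt_inv_mul_one_sub {y : ℝ} (h : y * (1 - y) ≠ 0) :
    HasDerivAt (fun y => (y * (1 - y))⁻¹) ((2 * y - 1) / (y * (1 - y)) ^ 2) y :=
  (((hasDerivAt_id' y).mul ((hasDerivAt_id' y).const_sub 1)).inv h).congr_deriv
    (by simp only [Pi.mul_apply]; ring)

lemma abs_deriv2_logit_le {a y : ℝ} (ha : 0 < a) (hy : y ∈ Ioo a (1 - a)) :
    |(2 * y - 1) / (y * (1 - y)) ^ 2| ≤ (1 - 2 * a) / (a * (1 - a)) ^ 2 := by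
  obtain ⟨hay, hya⟩ := hy
  have hvar : a * (1 - a) ≤ y * (1 - y) := by nlinarith
  have hpos : 0 < a * (1 - a) := mul_pos ha (by linarith)
  rw [abs_div, abs_of_nonneg (sq_nonneg (y * (1 - y)))]
  apply div_le_div₀ (by linarith) (abs_le.mpr ⟨by linarith, by linarith⟩) (by positivity)
  exact pow_le_pow_left₀ hpos.le hvar 2

lemma abs_sum_mul_logit_sub_logit_sum_le {ι : Type*} {t : Finset ι} {w x : ι → ℝ} {a : ℝ}
    (ha : 0 < a) (hw : ∀ i ∈ t, 0 ≤ w i) (hw₁ : ∑ i ∈ t, w i = 1)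
    (hx : ∀ i ∈ t, x i ∈ Icc a (1 - a)) :
    |∑ i ∈ t, w i * logit (x i) - logit (∑ i ∈ t, w i * x i)| ≤
      (1 - 2 * a) / (2 * (a * (1 - a)) ^ 2) *
        (∑ i ∈ t, w i * x i ^ 2 - (∑ i ∈ t, w i * x i) ^ 2) := by
  have hunit : Icc a (1 - a) ⊆ Ioo 0 1 := Icc_subset_Ioo ha (by linarith)
  rw [mul_comm 2 ((a * (1 - a)) ^ 2), ← div_div]
  refine abs_sum_mul_sub_map_sum_le_of_abs_deriv2_le (f' := fun y => (y * (1 - y))⁻¹)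
    (f'' := fun y => (2 * y - 1) / (y * (1 - y)) ^ 2) (convex_Icc a (1 - a))
    (fun y hy => ?_) (fun y hy => ?_) (fun y hy => ?_) (fun y hy => ?_) hw hw₁ hx
  · obtain ⟨h₀, h₁⟩ := hunit hy
    exact (hasDerivAt_logit h₀ h₁).continuousAt.continuousWithinAt
  all_goals
    rw [interior_Icc] at hy
    obtain ⟨h₀, h₁⟩ := hunit (Ioo_subset_Icc_self hy)
  · exact (hasDerivAt_logit h₀ h₁).hasDerivWithinAt
  · exact (hasDerivAt_inv_mul_one_sub (by nlinarith)).hasDerivWithinAt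
  · exact abs_deriv2_logit_le ha hy

lemma rpow_eq_exp_mul_logit {y : ℝ} (h₀ : 0 < y) (h₁ : y < 1) (r : ℝ) :
    (y / (1 - y)) ^ r = exp (r * logit y) := by
  rw [rpow_def_of_pos (div_pos h₀ (by linarith)), logit, mul_comm]

theorem ky_fan_symmetric_interval_general
    (n : ℕ) (a : ℝ) (ha : 0 < a)
    (w x : Fin n → ℝ)
    (hw : ∀ i, 0 < w i) (hws : ∑ i, w i = 1)
    (hx : ∀ i, x i ∈ Set.Icc a (1 - a)) :
    (Real.exp ((1 - 2 * a) / (2 * (a * (1 - a)) ^ 2) *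
          (∑ i, w i * (x i) ^ 2 - (∑ i, w i * x i) ^ 2)))⁻¹ *
        ∏ i, (x i / (1 - x i)) ^ w i ≤
      (∑ i, w i * x i) / (∑ i, w i * (1 - x i)) ∧
    (∑ i, w i * x i) / (∑ i, w i * (1 - x i)) ≤
      Real.exp ((1 - 2 * a) / (2 * (a * (1 - a)) ^ 2) *
          (∑ i, w i * (x i) ^ 2 - (∑ i, w i * x i) ^ 2)) *
        ∏ i, (x i / (1 - x i)) ^ w i := by
  have hunit : Icc a (1 - a) ⊆ Ioo 0 1 := Icc_subset_Ioo ha (by linarith)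
  have hmean : ∑ i, w i * x i ∈ Icc a (1 - a) :=
    (convex_Icc a (1 - a)).sum_mem (fun i _ => (hw i).le) hws (fun i _ => hx i)
  have hcompl : ∑ i, w i * (1 - x i) = 1 - ∑ i, w i * x i := by
    simp only [mul_sub, mul_one, sum_sub_distrib, hws]
  have hprod : ∏ i, (x i / (1 - x i)) ^ w i = exp (∑ i, w i * logit (x i)) := by
    rw [exp_sum]
    exact prod_congr rfl fun i _ => rpow_eq_exp_mul_logit (hunit (hx i)).1 (hunit (hx i)).2 _
  have hratio : (∑ i, w i * x i) / (∑ i, w i * (1 - x i)) = exp (logit (∑ i, w i * x i)) := by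
    rw [hcompl, logit, exp_log (div_pos (hunit hmean).1 (sub_pos.mpr (hunit hmean).2))]
  have hgap := abs_le.mp <| abs_sum_mul_logit_sub_logit_sum_le ha (fun i _ => (hw i).le) hws
    (fun i _ => hx i)
  rw [hprod, hratio, inv_mul_le_iff₀ (exp_pos _), ← exp_add, ← exp_add, exp_le_exp, exp_le_exp]
  constructor <;> linarith [hgap.1, hgap.2]

theorem ky_fan_symmetric_interval
    (n : ℕ) (a : ℝ) (ha : 0 < a) (ha' : a < 1 / 2)
    (w x : Fin n → ℝ)
    (hw : ∀ i, 0 < w i) (hws : ∑ i, w i = 1)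
    (hx : ∀ i, x i ∈ Set.Icc a (1 - a)) :
    (Real.exp ((1 - 2 * a) / (2 * (a * (1 - a)) ^ 2) *
          (∑ i, w i * (x i) ^ 2 - (∑ i, w i * x i) ^ 2)))⁻¹ *
        ∏ i, (x i / (1 - x i)) ^ w i ≤
      (∑ i, w i * x i) / (∑ i, w i * (1 - x i)) ∧
    (∑ i, w i * x i) / (∑ i, w i * (1 - x i)) ≤
      Real.exp ((1 - 2 * a) / (2 * (a * (1 - a)) ^ 2) *
          (∑ i, w i * (x i) ^ 2 - (∑ i, w i * x i) ^ 2)) *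
        ∏ i, (x i / (1 - x i)) ^ w i :=
  ky_fan_symmetric_interval_general n a ha w x hw hws hx
end
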